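/- arXiv:1502.00426 — 13 statements merged into one kernel-verified Lean document; each statement's English description precedes it below -/
import Mathlib

section
/- Let R be an associative (not necessarily commutative) ring with unit, let β be a central element of R, and let a, b, c ∈ R satisfy the three-term relations a·c = b·a + c·b − β·b and c·a = a·b + b·c − β·b. Define the Dunkl elements θ₁ = a + b and θ₂ = (β − a) + c. Then θ₁·θ₂ = θ₂·θ₁. -/
theorem stmt_1 {R : Type*} [Ring R] (β a b c : R)
    (hβ : ∀ r : R, β * r = r * β)
    (h1 : a * c = b * a + c * b - β * b)
    (h2 : c * a = a * b + b * c - β * b) :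
    (a + b) * ((β - a) + c) = ((β - a) + c) * (a + b) := by
  have ha := hβ a
  have hb := hβ b
  noncomm_ring
  rw [ha, hb] at *
  linear_combination (norm := noncomm_ring) h1 - h2
end

section
/- Let R be an associative ring with unit, β a central element, and a, b, c ∈ R elements satisfying a·c = b·a + c·b − β·b and c·a = a·b + b·c − β·b. Then (a − b + c)² = β·(a − b + c) + (a² − β·a) + (b² − β·b) + (c² − β·c). -/
theorem stmt_2 {R : Type*} [Ring R] (β a b c : R)
    (hβ : ∀ r : R, β * r = r * β)
    (h1 : a * c = b * a + c * b - β * b)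
    (h2 : c * a = a * b + b * c - β * b) :
    (a - b + c) ^ 2 =
      β * (a - b + c) + (a ^ 2 - β * a) + (b ^ 2 - β * b) + (c ^ 2 - β * c) := by
  have e : (a - b + c) ^ 2 = a^2 + b^2 + c^2 - a*b - b*a - b*c - c*b + (a*c + c*a) := by
    noncomm_ring
  rw [e, h1, h2]
  noncomm_ring
end

section
/- Let R be an associative ring with unit, β a central element, and a, b, c ∈ R satisfying a·c = b·a + c·b − β·b and c·a = a·b + b·c − β·b. Set q_a := a² − β·a, q_b := b² − β·b, q_c := c² − β·c. Then: (i) a·b·c − c·b·a = b·q_a − q_a·b = q_c·b − b·q_c (deviation from the quantum Yang–Baxter relation), and (ii) a·c·a − c·a·c = q_a·b − b·q_c (deviation from the Coxeter relation). In particular, if q_a and q_c are central then a·b·c = c·b·a. -/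
theorem stmt_3 {R : Type*} [Ring R] (β a b c : R)
    (hβ : ∀ r : R, β * r = r * β)
    (h1 : a * c = b * a + c * b - β * b)
    (h2 : c * a = a * b + b * c - β * b) :
    (a * b * c - c * b * a = b * (a ^ 2 - β * a) - (a ^ 2 - β * a) * b) ∧
    (a * b * c - c * b * a = (c ^ 2 - β * c) * b - b * (c ^ 2 - β * c)) ∧
    (a * c * a - c * a * c = (a ^ 2 - β * a) * b - b * (c ^ 2 - β * c)) ∧
    ((∀ r : R, (a ^ 2 - β * a) * r = r * (a ^ 2 - β * a)) →
      (∀ r : R, (c ^ 2 - β * c) * r = r * (c ^ 2 - β * c)) →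
      a * b * c = c * b * a) := by
  have g1 : a * b * c - c * b * a = b * (a ^ 2 - β * a) - (a ^ 2 - β * a) * b := by
    linear_combination (norm := noncomm_ring) h1 * a - a * h2 - (hβ b) * a - (hβ a) * b
  refine ⟨g1, ?_, ?_, ?_⟩
  · linear_combination (norm := noncomm_ring) c * h1 - h2 * c + (hβ c) * b + (hβ b) * c
  · linear_combination (norm := noncomm_ring) a * h2 - h2 * c + (hβ a) * b + (hβ b) * c
  · intro hqa _
    have : a * b * c - c * b * a = 0 := by rw [g1, hqa b, sub_self]
    exact sub_eq_zero.mp this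
end

section
/- Let K be a field (or commutative ring), β ∈ K, and let p, q, r ∈ K be invertible elements satisfying p·q = r·p + q·r + β·r. Then (1 + β·p⁻¹)·(1 + β·q⁻¹) = 1 + β·r⁻¹. -/
theorem stmt_4 {K : Type*} [Field K] (β p q r : K)
    (hp : p ≠ 0) (hq : q ≠ 0) (hr : r ≠ 0)
    (h : p * q = r * p + q * r + β * r) :
    (1 + β * p⁻¹) * (1 + β * q⁻¹) = 1 + β * r⁻¹ := by
  field_simp
  linear_combination (-β) * h
end

section
/- Let F be a field of characteristic zero, n ≥ 2, and let z₁, …, z_n ∈ F be pairwise distinct. In the group algebra F[S_n] of the symmetric group, define the truncated Gaudin elements θ_i := Σ_{j ≠ i} (z_i − z_j)⁻¹ · s_{ij}, where s_{ij} ∈ S_n denotes the transposition exchanging i and j. Then the elements θ₁, …, θ_n pairwise commute: θ_i · θ_j = θ_j · θ_i for all i, j. -/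
open Finset Equiv

private lemma swap_ids {α : Type*} [DecidableEq α] {i j m : α} (hij : i ≠ j) (him : i ≠ m)
    (hjm : j ≠ m) :
    Equiv.swap i m * Equiv.swap j i = Equiv.swap i j * Equiv.swap j m ∧
    Equiv.swap j i * Equiv.swap i m = Equiv.swap j m * Equiv.swap i j ∧
    Equiv.swap i m * Equiv.swap j m = Equiv.swap j m * Equiv.swap i j ∧
    Equiv.swap j m * Equiv.swap i m = Equiv.swap i j * Equiv.swap j m := by
  refine ⟨?_, ?_, ?_, ?_⟩ <;>
  · ext x
    simp only [Equiv.Perm.mul_apply, Equiv.swap_apply_def]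
    split_ifs <;> simp_all

private lemma swap_commute {α : Type*} [DecidableEq α] {i k j l : α}
    (h1 : i ≠ j) (h2 : i ≠ l) (h3 : k ≠ j) (h4 : k ≠ l) :
    Commute (Equiv.swap i k) (Equiv.swap j l) := by
  apply Equiv.Perm.Disjoint.commute
  intro x
  by_cases hi : x = i
  · subst hi; right; exact Equiv.swap_apply_of_ne_of_ne h1 h2
  by_cases hk : x = k
  · subst hk; right; exact Equiv.swap_apply_of_ne_of_ne h3 h4
  · left; exact Equiv.swap_apply_of_ne_of_ne hi hk

theorem stmt_5 {F : Type*} [Field F] [CharZero F] (n : ℕ) (hn : 2 ≤ n)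
    (z : Fin n → F) (hz : Function.Injective z)
    (θ : Fin n → MonoidAlgebra F (Equiv.Perm (Fin n)))
    (hθ : ∀ i : Fin n, θ i = ∑ j ∈ Finset.univ.erase i,
      (z i - z j)⁻¹ • MonoidAlgebra.of F (Equiv.Perm (Fin n)) (Equiv.swap i j)) :
    ∀ i j : Fin n, θ i * θ j = θ j * θ i := by
  intro i j
  rcases eq_or_ne i j with rfl | hij
  · rfl
  set of := MonoidAlgebra.of F (Equiv.Perm (Fin n)) with hof
  set f : Fin n → Fin n → MonoidAlgebra F (Equiv.Perm (Fin n)) := fun k l =>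
    ((z i - z k)⁻¹ * (z j - z l)⁻¹) •
      (of (Equiv.swap i k) * of (Equiv.swap j l) - of (Equiv.swap j l) * of (Equiv.swap i k))
    with hf
  rw [← sub_eq_zero]
  have key : θ i * θ j - θ j * θ i =
      ∑ k ∈ univ.erase i, ∑ l ∈ univ.erase j, f k l := by
    rw [hθ i, hθ j, Finset.sum_mul_sum, Finset.sum_mul_sum, Finset.sum_comm (s := univ.erase j)]
    rw [← Finset.sum_sub_distrib]
    refine Finset.sum_congr rfl fun k _ => ?_
    rw [← Finset.sum_sub_distrib]
    refine Finset.sum_congr rfl fun l _ => ?_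
    rw [hf]
    simp only [smul_mul_smul_comm, smul_sub]
    rw [mul_comm ((z j - z l)⁻¹)]
  rw [key]
  -- set T
  set T : Finset (Fin n) := (univ.erase i).erase j with hT
  have hjT : j ∉ T := Finset.notMem_erase j _
  have hiT : i ∉ T := fun h => Finset.notMem_erase i univ (Finset.mem_of_mem_erase h)
  have hins1 : univ.erase i = insert j T := by
    rw [hT, Finset.insert_erase (Finset.mem_erase.2 ⟨hij.symm, Finset.mem_univ j⟩)]
  have hins2 : univ.erase j = insert i T := by
    rw [hT, Finset.erase_right_comm, Finset.insert_erase (Finset.mem_erase.2 ⟨hij, Finset.mem_univ i⟩)]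
  have hdists : ∀ m ∈ T, m ≠ i ∧ m ≠ j := fun m hm =>
    ⟨Finset.ne_of_mem_erase (Finset.mem_of_mem_erase hm), Finset.ne_of_mem_erase hm⟩
  -- inner sums
  have inner : ∀ k, ∑ l ∈ univ.erase j, f k l = f k i + ∑ l ∈ T, f k l := by
    intro k
    rw [hins2, Finset.sum_insert hiT]
  have fji : f j i = 0 := by
    rw [hf]
    simp [Equiv.swap_comm i j]
  have fdisj : ∀ k ∈ T, ∀ l ∈ T, l ≠ k → f k l = 0 := by
    intro k hk l hl hlk
    obtain ⟨hki, hkj⟩ := hdists k hk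
    obtain ⟨hli, hlj⟩ := hdists l hl
    have hc : Commute (Equiv.swap i k) (Equiv.swap j l) :=
      swap_commute hij hli.symm hkj (hlk.symm)
    rw [hf]
    simp only []
    rw [← map_mul, ← map_mul, hc.eq, sub_self, smul_zero]
  have step : ∑ k ∈ univ.erase i, ∑ l ∈ univ.erase j, f k l =
      ∑ m ∈ T, (f j m + (f m i + f m m)) := by
    rw [hins1, Finset.sum_insert hjT, inner j, fji, zero_add, Finset.sum_add_distrib]
    congr 1
    refine Finset.sum_congr rfl fun k hk => ?_
    rw [inner k]
    congr 1
    exact Finset.sum_eq_single_of_mem k hk (fun l hl hlk => fdisj k hk l hl hlk)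
  rw [step]
  apply Finset.sum_eq_zero
  intro m hm
  obtain ⟨hmi, hmj⟩ := hdists m hm
  obtain ⟨e1, e2, e3, e4⟩ := swap_ids hij hmi.symm hmj.symm
  have hzij : z i - z j ≠ 0 := sub_ne_zero.2 fun h => hij (hz h)
  have hzji : z j - z i ≠ 0 := sub_ne_zero.2 fun h => hij.symm (hz h)
  have hzim : z i - z m ≠ 0 := sub_ne_zero.2 fun h => hmi (hz h).symm
  have hzjm : z j - z m ≠ 0 := sub_ne_zero.2 fun h => hmj (hz h).symm
  rw [hf]
  simp only [← map_mul, e1, e2, e3, e4]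
  rw [(neg_sub (of (Equiv.swap i j * Equiv.swap j m)) (of (Equiv.swap j m * Equiv.swap i j))).symm,
    smul_neg, ← neg_smul, ← add_smul, ← add_smul]
  convert zero_smul F _ using 2
  field_simp
  ring
end

section
/- For all nonnegative integers n, m the following polynomial identity in the variable β holds: Σ_{k=0}^{min(n,m)} C(n+m−k, m)·C(m, k)·β^k = Σ_{k=0}^{min(n,m)} C(n, k)·C(m, k)·(1+β)^k, where C(a,b) denotes the binomial coefficient. In particular, both sides at β = 1 equal the Delannoy number D(n,m). -/
/-!
Comparing coefficients of `X ^ j`, and expanding `(1 + X) ^ k` by the binomial theorem, the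
identity becomes `∑ k, C(n,k) C(m,k) C(k,j) = C(n+m-j, m) C(m,j)`. Trinomial revision turns
`C(m,k) C(k,j)` into `C(m,j) C(m-j, m-k)`, after which the sum over `k` is Vandermonde's
convolution for `C(n + (m-j), m)`.
-/

open Finset Polynomial

namespace Nat

theorem choose_mul_choose_eq_choose_mul_choose_sub {m j k : ℕ} (hjm : j ≤ m) (hkm : k ≤ m) :
    m.choose k * k.choose j = m.choose j * (m - j).choose (m - k) := by
  rcases le_or_gt j k with hjk | hkj
  · rw [choose_mul hjk, choose_symm_of_eq_add (by omega : m - j = (k - j) + (m - k))]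
  · rw [choose_eq_zero_of_lt hkj, choose_eq_zero_of_lt (by omega : m - j < m - k)]
    simp

theorem sum_range_choose_mul_choose_mul_choose (n m j : ℕ) :
    ∑ k ∈ range (m + 1), n.choose k * m.choose k * k.choose j =
      (n + m - j).choose m * m.choose j := by
  rcases le_or_gt j m with hjm | hmj
  · calc ∑ k ∈ range (m + 1), n.choose k * m.choose k * k.choose j
        = (∑ k ∈ range (m + 1), n.choose k * (m - j).choose (m - k)) * m.choose j := by
          rw [sum_mul]
          refine sum_congr rfl fun k hk => ?_
          rw [mul_assoc, choose_mul_choose_eq_choose_mul_choose_sub hjm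
            (mem_range_succ_iff.mp hk)]
          ring
      _ = (n + m - j).choose m * m.choose j := by
          rw [← Finset.Nat.sum_antidiagonal_eq_sum_range_succ_mk
            (fun ab => n.choose ab.1 * (m - j).choose ab.2), ← add_choose_eq,
            Nat.add_sub_assoc hjm]
  · rw [choose_eq_zero_of_lt hmj, mul_zero]
    refine sum_eq_zero fun k hk => ?_
    rw [choose_eq_zero_of_lt (by rw [mem_range] at hk; omega : k < j), mul_zero]

theorem sum_range_min_choose_mul_choose_mul_choose (n m j : ℕ) :
    ∑ k ∈ range (min n m + 1), n.choose k * m.choose k * k.choose j =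
      (n + m - j).choose m * m.choose j := by
  rw [← sum_range_choose_mul_choose_mul_choose]
  refine sum_subset (range_subset_range.2 (by omega)) fun k hk hk' => ?_
  simp only [mem_range] at hk hk'
  rw [choose_eq_zero_of_lt (by omega : n < k), zero_mul, zero_mul]

theorem choose_add_sub_mul_choose_eq_zero {n m j : ℕ} (hj : min n m < j) :
    (n + m - j).choose m * m.choose j = 0 := by
  rcases le_or_gt j m with hjm | hmj
  · rw [choose_eq_zero_of_lt (by omega : n + m - j < m), zero_mul]
  · rw [choose_eq_zero_of_lt hmj, mul_zero]

end Nat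

theorem stmt_6 (n m : ℕ) :
    ∑ k ∈ Finset.range (min n m + 1),
        Polynomial.C (((n + m - k).choose m * m.choose k : ℕ) : ℤ) * Polynomial.X ^ k =
    ∑ k ∈ Finset.range (min n m + 1),
        Polynomial.C ((n.choose k * m.choose k : ℕ) : ℤ) * (1 + Polynomial.X) ^ k := by
  ext j
  have hRHS : (∑ k ∈ range (min n m + 1),
      C ((n.choose k * m.choose k : ℕ) : ℤ) * (1 + X) ^ k).coeff j =
        (((n + m - j).choose m * m.choose j : ℕ) : ℤ) := by
    simp only [finsetSum_coeff, coeff_C_mul, coeff_one_add_X_pow]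
    exact_mod_cast Nat.sum_range_min_choose_mul_choose_mul_choose n m j
  rw [hRHS, finsetSum_coeff]
  simp only [coeff_C_mul_X_pow, sum_ite_eq, mem_range]
  split_ifs with hj
  · rfl
  · rw [Nat.choose_add_sub_mul_choose_eq_zero (by omega), Nat.cast_zero]
end

section
/- Let N(n,k) := (1/n)·C(n,k)·C(n,k+1) denote the Narayana numbers. For all integers n ≥ 1 and 0 ≤ d ≤ n−1: Σ_{k=0}^{n−1} N(n,k)·C(k,d) = (1/(n+1))·C(2n−d, n)·C(n−1, d). -/
/-!
Since `C(n,k) C(k,d) = C(n,d) C(n-d,k-d)`, the factor `C(n,d)` comes out of the sum, and what is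
left, `∑ⱼ C(n-d,j) C(n,d+1+j)`, is a Chu–Vandermonde convolution equal to `C(2n-d,n+1)`.
The absorption identities `C(N,k+1)(k+1) = C(N,k)(N-k)` and `C(n,d)(n-d) = n C(n-1,d)` then turn
`C(n,d) C(2n-d,n+1) / n` into `C(2n-d,n) C(n-1,d) / (n+1)`.
-/
open Finset

namespace Nat

theorem sum_range_choose_mul_choose_add (m N r : ℕ) :
    ∑ j ∈ range (m + 1), m.choose j * N.choose (r + j) = (m + N).choose (m + r) := by
  have hreflect : ∑ j ∈ range (m + 1), m.choose j * N.choose (r + j) =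
      ∑ i ∈ range (m + 1), m.choose i * N.choose (m + r - i) := by
    rw [← sum_range_reflect]
    refine sum_congr rfl fun j hj => ?_
    have hjm : j ≤ m := mem_range_succ_iff.mp hj
    rw [add_tsub_cancel_right, choose_symm hjm, show r + (m - j) = m + r - j by omega]
  rw [hreflect, add_choose_eq, Finset.Nat.sum_antidiagonal_eq_sum_range_succ_mk, succ_eq_add_one,
    show m + r + 1 = (m + 1) + r by omega, sum_range_add _ (m + 1) r,
    sum_eq_zero (s := range r) fun i _ => by rw [choose_eq_zero_of_lt (by omega), zero_mul],
    add_zero]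

theorem sum_range_choose_mul_choose_succ_mul_choose (n d : ℕ) :
    ∑ k ∈ range n, n.choose k * n.choose (k + 1) * k.choose d =
      n.choose d * (2 * n - d).choose (n + 1) := by
  rcases lt_or_ge n d with hnd | hdn
  · rw [choose_eq_zero_of_lt hnd, zero_mul]
    exact sum_eq_zero fun k hk => by
      rw [choose_eq_zero_of_lt ((mem_range.mp hk).trans hnd), mul_zero]
  obtain ⟨m, rfl⟩ := exists_add_of_le hdn
  have hterm (j : ℕ) : (d + m).choose (d + j) * (d + m).choose (d + j + 1) * (d + j).choose d =
      (d + m).choose d * (m.choose j * (d + m).choose (d + 1 + j)) := by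
    rw [mul_right_comm, choose_mul (by omega), add_tsub_cancel_left, add_tsub_cancel_left]
    ring_nf
  rw [sum_range_add, sum_eq_zero fun k hk => by
      rw [choose_eq_zero_of_lt (mem_range.mp hk), mul_zero], zero_add]
  simp only [hterm, ← mul_sum]
  -- append the vanishing term `j = m` to get the convolution over `range (m + 1)`
  rw [← add_zero (∑ j ∈ range m, _), ← mul_zero (m.choose m),
    ← choose_eq_zero_of_lt (show d + m < d + 1 + m by omega), ← sum_range_succ,
    sum_range_choose_mul_choose_add,
    show 2 * (d + m) - d = m + (d + m) by omega, show d + m + 1 = m + (d + 1) by omega]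

theorem choose_mul_choose_two_mul_sub_mul_succ (n d : ℕ) :
    n.choose d * (2 * n - d).choose (n + 1) * (n + 1) =
      (2 * n - d).choose n * (n - 1).choose d * n := by
  rcases n with _ | n
  · simp
  rw [mul_assoc, choose_succ_right_eq, add_tsub_cancel_right, mul_assoc, choose_mul_succ_eq,
    show 2 * (n + 1) - d - (n + 1) = n + 1 - d by omega]
  ring

end Nat

theorem stmt_7_general (n d : ℕ) (hn : 1 ≤ n) :
    ∑ k ∈ Finset.range n,
        ((1 : ℚ) / n * (n.choose k : ℚ) * (n.choose (k + 1) : ℚ)) * (k.choose d : ℚ) =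
    (1 : ℚ) / (n + 1) * ((2 * n - d).choose n : ℚ) * ((n - 1).choose d : ℚ) := by
  have hn0 : (n : ℚ) ≠ 0 := by positivity
  have hsum : ∑ k ∈ Finset.range n, (n.choose k * n.choose (k + 1) * k.choose d : ℚ) =
      n.choose d * (2 * n - d).choose (n + 1) := by
    exact_mod_cast Nat.sum_range_choose_mul_choose_succ_mul_choose n d
  have hcross : (n.choose d * (2 * n - d).choose (n + 1) * (n + 1) : ℚ) =
      (2 * n - d).choose n * (n - 1).choose d * n := by
    exact_mod_cast Nat.choose_mul_choose_two_mul_sub_mul_succ n d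
  simp_rw [mul_assoc, ← Finset.mul_sum, ← mul_assoc, hsum]
  field_simp
  linear_combination hcross

theorem stmt_7 (n d : ℕ) (hn : 1 ≤ n) (hd : d ≤ n - 1) :
    ∑ k ∈ Finset.range n,
        ((1 : ℚ) / n * (n.choose k : ℚ) * (n.choose (k + 1) : ℚ)) * (k.choose d : ℚ) =
    (1 : ℚ) / (n + 1) * ((2 * n - d).choose n : ℚ) * ((n - 1).choose d : ℚ) :=
  stmt_7_general n d hn
end

section
/- Let T(n,k) := (1/(k+1))·C(n,k)·C(n+k,k) and N(n,k) := (1/n)·C(n,k)·C(n,k+1). Then for every integer n ≥ 1 the polynomial identity Σ_{k=0}^{n} T(n,k)·x^k·(1−x)^{n−k} = Σ_{k=0}^{n−1} N(n,k)·x^k holds in ℚ[x]. -/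
/-!
Rewrite `x ^ j` as `x ^ j * (x + (1 - x)) ^ (n - j)` and expand by the binomial theorem: the
coefficient of `x ^ k * (1 - x) ^ (n - k)` becomes `∑ j, N(n, j) * C(n - j, k - j)`.
Since `C(n, j) * C(n - j, k - j) = C(n, k) * C(k, j)`, Vandermonde's identity
`∑ j, C(k, j) * C(n, j + 1) = C(n + k, k + 1)` turns this sum into `T(n, k)`.
-/

open Finset Polynomial

theorem Nat.sum_range_choose_mul_choose_succ (k n : ℕ) :
    ∑ j ∈ range (k + 1), k.choose j * n.choose (j + 1) = (k + n).choose (k + 1) := by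
  rw [Nat.add_choose_eq, Nat.sum_antidiagonal_succ', Nat.choose_succ_self, zero_mul, zero_add,
    Nat.sum_antidiagonal_eq_sum_range_succ (fun a b => k.choose a * n.choose (b + 1)),
    ← sum_range_reflect]
  refine sum_congr rfl fun j hjk => ?_
  have hj : j ≤ k := by grind
  rw [show k + 1 - 1 - j = k - j by grind, Nat.choose_symm hj]

theorem sum_mul_pow_mul_add_pow {R : Type*} [CommSemiring R] (c : ℕ → R) (x y : R) (n : ℕ) :
    ∑ j ∈ range (n + 1), c j * x ^ j * (x + y) ^ (n - j) =
      ∑ k ∈ range (n + 1),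
        (∑ j ∈ range (k + 1), c j * (n - j).choose (k - j)) * x ^ k * y ^ (n - k) := by
  have hexpand : ∀ j ∈ range (n + 1), c j * x ^ j * (x + y) ^ (n - j) =
      ∑ i ∈ range (n + 1 - j), c j * (n - j).choose i * x ^ (j + i) * y ^ (n - (j + i)) := by
    intro j hj
    rw [add_pow, mul_sum, show n - j + 1 = n + 1 - j by grind]
    refine sum_congr rfl fun i _ => ?_
    rw [pow_add, Nat.sub_add_eq]
    ring
  rw [sum_congr rfl hexpand, ← sum_range_diag_flip]
  refine sum_congr rfl fun k _ => ?_
  rw [sum_mul, sum_mul]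
  refine sum_congr rfl fun j hj => ?_
  rw [Nat.add_sub_of_le (by grind)]

theorem Nat.sum_range_choose_mul_choose_mul_choose_s9 (n k : ℕ) :
    (∑ j ∈ range (k + 1), n.choose j * n.choose (j + 1) * (n - j).choose (k - j)) * (k + 1) =
      n.choose k * (n + k).choose k * n := by
  have hsplit : ∀ j ∈ range (k + 1), n.choose j * n.choose (j + 1) * (n - j).choose (k - j) =
      n.choose k * (k.choose j * n.choose (j + 1)) := by
    intro j hj
    rw [mul_right_comm, ← Nat.choose_mul (by grind : j ≤ k)]
    ring
  rw [sum_congr rfl hsplit, ← mul_sum, Nat.sum_range_choose_mul_choose_succ, add_comm k n,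
    mul_assoc, Nat.choose_succ_right_eq, Nat.add_sub_cancel, mul_assoc]

theorem sum_narayana_mul_choose (n k : ℕ) (hn : n ≠ 0) :
    ∑ j ∈ range (k + 1),
        (1 : ℚ) / n * n.choose j * n.choose (j + 1) * (n - j).choose (k - j) =
      1 / (k + 1) * n.choose k * (n + k).choose k := by
  have h := congrArg (Nat.cast : ℕ → ℚ) (Nat.sum_range_choose_mul_choose_mul_choose_s9 n k)
  push_cast at h
  simp_rw [mul_assoc (1 / (n : ℚ)), ← mul_sum]
  field_simp
  linear_combination h

theorem stmt_9 (n : ℕ) (hn : 1 ≤ n) :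
    ∑ k ∈ Finset.range (n + 1),
        Polynomial.C ((1 : ℚ) / (k + 1) * (n.choose k : ℚ) * ((n + k).choose k : ℚ)) *
          Polynomial.X ^ k * (1 - Polynomial.X) ^ (n - k) =
    ∑ k ∈ Finset.range n,
        Polynomial.C ((1 : ℚ) / n * (n.choose k : ℚ) * (n.choose (k + 1) : ℚ)) *
          Polynomial.X ^ k := by
  symm
  calc ∑ k ∈ range n, C ((1 : ℚ) / n * n.choose k * n.choose (k + 1)) * X ^ k
      = ∑ j ∈ range (n + 1),
          C ((1 : ℚ) / n * n.choose j * n.choose (j + 1)) * X ^ j * (X + (1 - X)) ^ (n - j) := by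
        -- the new term `j = n` vanishes because `n.choose (n + 1) = 0`
        simp [sum_range_succ]
    _ = _ := sum_mul_pow_mul_add_pow _ _ _ _
    _ = _ := by
        refine sum_congr rfl fun k _ => ?_
        rw [← sum_narayana_mul_choose n k (by omega), map_sum]
        simp [mul_assoc]
end

section
/- For every integer n ≥ 1: Π_{1 ≤ i < j ≤ n} (i+j+1)/(i+j−1) = Cat_n, where Cat_n = (1/(n+1))·C(2n,n) is the n-th Catalan number. (For n = 1 the empty product equals 1 = Cat₁.) -/
/-!
Induct on `n`. Passing from `n` to `n + 1` adds the column `j = n + 1`, whose factors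
`(i + n + 2) / (i + n)` telescope over `1 ≤ i ≤ n` to `(2n + 1)(2n + 2) / ((n + 1)(n + 2))`;
this is exactly the ratio `Cat (n + 1) / Cat n`.
-/

open Finset

lemma prod_Icc_add_two_div_self (c m : ℕ) :
    ∏ i ∈ Icc 1 m, ((i + c + 2 : ℚ) / (i + c)) =
      (m + c + 1) * (m + c + 2) / ((c + 1) * (c + 2)) := by
  induction m with
  | zero => simp [div_self (by positivity : ((c : ℚ) + 1) * (c + 2) ≠ 0)]
  | succ m ih =>
    rw [prod_Icc_succ_top (by omega), ih]
    have hm : (m + 1 + c : ℚ) ≠ 0 := by positivity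
    push_cast
    field_simp
    ring

lemma prod_Ioc_succ_top_add_div_add_sub {i n : ℕ} (hi : i ≤ n) :
    ∏ j ∈ Ioc i (n + 1), ((i + j + 1 : ℚ) / (i + j - 1)) =
      (∏ j ∈ Ioc i n, ((i + j + 1 : ℚ) / (i + j - 1))) * ((i + n + 2) / (i + n)) := by
  rw [prod_Ioc_succ_top hi]
  push_cast
  ring_nf

lemma one_div_succ_mul_choose_two_mul_succ (n : ℕ) :
    (1 : ℚ) / (n + 1 + 1) * ((2 * (n + 1)).choose (n + 1) : ℚ) =
      1 / (n + 1) * ((2 * n).choose n : ℚ) * ((n + n + 1) * (n + n + 2) / ((n + 1) * (n + 2))) := by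
  have h := Nat.succ_mul_centralBinom_succ n
  simp only [Nat.centralBinom] at h
  have hq : ((n : ℚ) + 1) * ((2 * (n + 1)).choose (n + 1) : ℚ) =
      2 * (2 * n + 1) * ((2 * n).choose n : ℚ) := by exact_mod_cast h
  field_simp
  linear_combination ((n + 1) * (n + 2) : ℚ) * hq

theorem stmt_10_general (n : ℕ) :
    ∏ i ∈ Finset.Icc 1 n, ∏ j ∈ Finset.Ioc i n,
        (((i : ℚ) + (j : ℚ) + 1) / ((i : ℚ) + (j : ℚ) - 1)) =
    (1 : ℚ) / (n + 1) * ((2 * n).choose n : ℚ) := by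
  induction n with
  | zero => simp
  | succ n ih =>
    rw [prod_Icc_succ_top (by omega), Ioc_self, prod_empty, mul_one,
      prod_congr rfl fun i hi => prod_Ioc_succ_top_add_div_add_sub (mem_Icc.mp hi).2,
      prod_mul_distrib, ih, prod_Icc_add_two_div_self n n]
    push_cast
    exact (one_div_succ_mul_choose_two_mul_succ n).symm

theorem stmt_10 (n : ℕ) (hn : 1 ≤ n) :
    ∏ i ∈ Finset.Icc 1 n, ∏ j ∈ Finset.Ioc i n,
        (((i : ℚ) + (j : ℚ) + 1) / ((i : ℚ) + (j : ℚ) - 1)) =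
    (1 : ℚ) / (n + 1) * ((2 * n).choose n : ℚ) :=
  stmt_10_general n
end

section
/- Let S(n,k) denote the Stirling numbers of the second kind. For every integer n ≥ 1, the identity Σ_{k=0}^{n−1} (−1)^k · S(n, n−k) · t^k · Π_{j=1}^{n−k} (1 + j·t) = (1 + t)^n holds in ℤ[t]. -/
/-- The Stirling numbers of the second kind. -/
def stirling2 : ℕ → ℕ → ℕ
  | 0, 0 => 1
  | 0, _ + 1 => 0
  | _ + 1, 0 => 0
  | n + 1, k + 1 => (k + 1) * stirling2 n (k + 1) + stirling2 n k

open Polynomial Finset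

lemma stirling2_eq_zero : ∀ {n k : ℕ}, n < k → stirling2 n k = 0
  | 0, 0, h => absurd h (by omega)
  | 0, _ + 1, _ => rfl
  | _ + 1, 0, h => absurd h (by omega)
  | n + 1, k + 1, h => by
    have h1 : n < k + 1 := by omega
    have h2 : n < k := by omega
    simp [stirling2, stirling2_eq_zero h1, stirling2_eq_zero h2]

noncomputable def Pp (m : ℕ) : Polynomial ℤ :=
  ∏ j ∈ Finset.Icc 1 m, (1 + (j : Polynomial ℤ) * Polynomial.X)

lemma Pp_succ (m : ℕ) :
    Pp (m + 1) = Pp m * (1 + ((m + 1 : ℕ) : Polynomial ℤ) * Polynomial.X) := by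
  rw [Pp, Pp, Finset.prod_Icc_succ_top (by omega)]

noncomputable def cc (n m : ℕ) : Polynomial ℤ :=
  (-1) ^ (n - m) * (stirling2 n m : Polynomial ℤ) * Polynomial.X ^ (n - m) * Pp m

lemma key (n : ℕ) :
    ∑ m ∈ Finset.range (n + 1), cc n m = (1 + Polynomial.X) ^ n := by
  induction n with
  | zero => simp [cc, Pp, stirling2]
  | succ n ih =>
    set b : ℕ → Polynomial ℤ := fun m =>
      (-1) ^ (n - m) * (m : Polynomial ℤ) * (stirling2 n m : Polynomial ℤ) *
        Polynomial.X ^ (n - m) * Polynomial.X * Pp m with hb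
    rw [Finset.sum_range_succ']
    have h0 : cc (n + 1) 0 = 0 := by simp [cc, stirling2]
    have hterm : ∀ m ∈ Finset.range (n + 1),
        cc (n + 1) (m + 1) = (b m - b (m + 1)) + cc n m * (1 + Polynomial.X) := by
      intro m hm
      have hmn : m ≤ n := by simpa using Nat.lt_succ_iff.mp (Finset.mem_range.mp hm)
      rcases eq_or_lt_of_le hmn with rfl | hlt
      · -- m = n case
        have e1 : m + 1 - (m + 1) = 0 := by omega
        have e2 : m - m = 0 := by omega
        have e3 : m - (m + 1) = 0 := by omega
        have hz : stirling2 m (m + 1) = 0 := stirling2_eq_zero (by omega)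
        simp only [cc, hb, e1, e2, e3, hz, Pp_succ, stirling2]
        push_cast
        ring
      · obtain ⟨d, hd⟩ : ∃ d, n - m = d + 1 := ⟨n - m - 1, by omega⟩
        have e1 : n + 1 - (m + 1) = d + 1 := by omega
        have e3 : n - (m + 1) = d := by omega
        simp only [cc, hb, e1, hd, e3, Pp_succ, stirling2]
        push_cast
        ring
    rw [Finset.sum_congr rfl hterm, Finset.sum_add_distrib, Finset.sum_range_sub',
      ← Finset.sum_mul, ih, h0]
    have hb0 : b 0 = 0 := by simp [hb]
    have hbn : b (n + 1) = 0 := by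
      simp [hb, stirling2_eq_zero (Nat.lt_succ_self n)]
    rw [hb0, hbn]
    ring

theorem stmt_13 (n : ℕ) (hn : 1 ≤ n) :
    ∑ k ∈ Finset.range n,
        (-1 : Polynomial ℤ) ^ k * (stirling2 n (n - k) : Polynomial ℤ) * Polynomial.X ^ k *
          ∏ j ∈ Finset.Icc 1 (n - k), (1 + (j : Polynomial ℤ) * Polynomial.X) =
    (1 + Polynomial.X) ^ n := by
  have hkey := key n
  rw [Finset.sum_range_succ'] at hkey
  have hc0 : cc n 0 = 0 := by
    obtain ⟨m, rfl⟩ : ∃ m, n = m + 1 := ⟨n - 1, by omega⟩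
    simp [cc, stirling2]
  rw [hc0, add_zero] at hkey
  rw [← Finset.sum_range_reflect]
  rw [← hkey]
  apply Finset.sum_congr rfl
  intro k hk
  have hk' : k < n := Finset.mem_range.mp hk
  have e1 : n - (n - 1 - k) = k + 1 := by omega
  have e2 : n - (k + 1) = n - 1 - k := by omega
  rw [e1, cc, e2, Pp]
end

section
/- Let S(n,k) denote the Stirling numbers of the second kind. For all nonnegative integers n, m: Σ_{j=0}^{min(n,m)} (j!)² · S(n+1, j+1) · S(m+1, j+1) = Σ_{j=0}^{n} (−1)^{n+j} · j! · S(n, j) · (j+1)^m. In particular the right-hand side is symmetric in n and m; the common value is the poly-Bernoulli number B_n^{(−m)}, which counts acyclic orientations of the complete bipartite graph K_{n,m}. -/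
lemma st_succ (n k : ℕ) : stirling2 (n+1) (k+1) = (k+1) * stirling2 n (k+1) + stirling2 n k := rfl

lemma st_zero (a b : ℕ) (h : a < b) : stirling2 a b = 0 := by
  induction a generalizing b with
  | zero => cases b with
    | zero => omega
    | succ b => rfl
  | succ a ih => cases b with
    | zero => omega
    | succ b =>
      rw [st_succ, ih (b+1) (by omega), ih b (by omega)]
      ring

lemma chooseId (j i : ℕ) :
    ((j:ℤ)+1) * ((j+1).choose (i+1)) - (j:ℤ) * (j.choose (i+1))
      = ((i:ℤ)+2) * (j.choose (i+1)) + ((i:ℤ)+1) * (j.choose i) := by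
  have c1 : ((j+1).choose (i+1) : ℤ) = (j.choose i : ℤ) + (j.choose (i+1) : ℤ) := by
    exact_mod_cast congrArg (Nat.cast : ℕ → ℤ) (Nat.choose_succ_succ j i)
  have c2 : ((j:ℤ)+1) * (j.choose i) = ((j+1).choose (i+1) : ℤ) * ((i:ℤ)+1) := by
    exact_mod_cast congrArg (Nat.cast : ℕ → ℤ) (Nat.add_one_mul_choose_eq j i)
  rw [c1] at c2 ⊢
  linarith [c2]

lemma lemA (m j : ℕ) : ((j:ℤ)+1)^m =
    ∑ i ∈ Finset.range (m+1), (stirling2 (m+1) (i+1) : ℤ) * i.factorial * (j.choose i) := by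
  induction m with
  | zero => simp [stirling2]
  | succ m ih =>
    have key : ∀ i ∈ Finset.range (m+2), (stirling2 (m+2) (i+1) : ℤ) * i.factorial * (j.choose i)
        = ((i:ℤ)+1) * stirling2 (m+1) (i+1) * i.factorial * (j.choose i)
          + (stirling2 (m+1) i : ℤ) * i.factorial * (j.choose i) := by
      intro i _
      rw [st_succ]
      push_cast
      ring
    rw [Finset.sum_congr rfl key, Finset.sum_add_distrib]
    rw [Finset.sum_range_succ (f := fun i => ((i:ℤ)+1) * stirling2 (m+1) (i+1) * i.factorial * (j.choose i))]
    rw [st_zero (m+1) (m+2) (by omega)]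
    rw [Finset.sum_range_succ' (f := fun i => (stirling2 (m+1) i : ℤ) * i.factorial * (j.choose i))]
    rw [show (stirling2 (m+1) 0 : ℤ) = 0 from rfl]
    simp only [Nat.cast_zero, mul_zero, zero_mul, add_zero]
    rw [pow_succ, ih, Finset.sum_mul, ← Finset.sum_add_distrib]
    refine Finset.sum_congr rfl ?_
    intro i _
    have h := Nat.add_one_mul_choose_eq j i
    have h2 := Nat.choose_succ_succ j i
    have h3 : ((i+1).factorial : ℤ) = ((i:ℤ)+1) * i.factorial := by
      rw [Nat.factorial_succ]; push_cast; ring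
    rw [h2] at h
    have h' : ((j:ℤ)+1) * (j.choose i) = ((j.choose i : ℤ) + (j.choose (i+1))) * ((i:ℤ)+1) := by
      exact_mod_cast congrArg (Nat.cast : ℕ → ℤ) h
    rw [h3]
    linear_combination (stirling2 (m+1) (i+1) : ℤ) * (i.factorial : ℤ) * h'

lemma lemB (n : ℕ) : ∀ i : ℕ,
    ∑ j ∈ Finset.range (n+1), (-1:ℤ)^(n+j) * j.factorial * (j.choose i) * (stirling2 n j : ℤ)
      = (i.factorial : ℤ) * stirling2 (n+1) (i+1) := by
  induction n with
  | zero =>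
    intro i
    cases i with
    | zero => simp [stirling2]
    | succ i =>
      simp [show stirling2 1 (i+2) = 0 from st_zero 1 (i+2) (by omega)]
  | succ n ih =>
    intro i
    -- split off j = 0
    rw [Finset.sum_range_succ' (f := fun j => (-1:ℤ)^(n+1+j) * j.factorial * (j.choose i) * (stirling2 (n+1) j : ℤ))]
    rw [show (stirling2 (n+1) 0 : ℤ) = 0 from rfl]
    simp only [mul_zero, add_zero]
    set g : ℕ → ℤ := fun j => -((-1:ℤ)^(n+j) * j.factorial * (j:ℤ) * (j.choose i) * (stirling2 n j : ℤ)) with hg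
    have step1 : ∑ k ∈ Finset.range (n+1),
        (-1:ℤ)^(n+1+(k+1)) * (k+1).factorial * ((k+1).choose i) * (stirling2 (n+1) (k+1) : ℤ)
        = ∑ j ∈ Finset.range (n+1),
            ((-1:ℤ)^(n+j) * j.factorial * (stirling2 n j : ℤ))
              * (((j:ℤ)+1) * ((j+1).choose i) - (j:ℤ) * (j.choose i)) := by
      have split : ∀ k ∈ Finset.range (n+1),
          (-1:ℤ)^(n+1+(k+1)) * (k+1).factorial * ((k+1).choose i) * (stirling2 (n+1) (k+1) : ℤ)
          = g (k+1)
            + (-1:ℤ)^(n+k) * (k+1).factorial * ((k+1).choose i) * (stirling2 n k : ℤ) := by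
        intro k _
        rw [hg]
        simp only
        rw [st_succ]
        push_cast
        rw [show n+1+(k+1) = (n+k)+2 from by ring, show n+(k+1) = (n+k)+1 from by ring,
          pow_succ, pow_succ]
        ring
      rw [Finset.sum_congr rfl split, Finset.sum_add_distrib]
      have e1 : ∑ j ∈ Finset.range (n+2), g j = (∑ k ∈ Finset.range (n+1), g (k+1)) + g 0 :=
        Finset.sum_range_succ' g (n+1)
      have e2 : ∑ j ∈ Finset.range (n+2), g j = (∑ j ∈ Finset.range (n+1), g j) + g (n+1) :=
        Finset.sum_range_succ g (n+1)
      have hg0 : g 0 = 0 := by simp [hg]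
      have hgn : g (n+1) = 0 := by
        rw [hg]; simp only; rw [st_zero n (n+1) (by omega)]; push_cast; ring
      have e3 : ∑ k ∈ Finset.range (n+1), g (k+1) = ∑ j ∈ Finset.range (n+1), g j := by
        linarith [e1, e2, hg0, hgn]
      rw [e3, ← Finset.sum_add_distrib]
      refine Finset.sum_congr rfl ?_
      intro j _
      rw [hg]
      simp only
      have hf : ((j+1).factorial : ℤ) = ((j:ℤ)+1) * j.factorial := by
        rw [Nat.factorial_succ]; push_cast; ring
      rw [hf]
      ring
    rw [step1]
    cases i with
    | zero =>
      have pt0 : ∀ j ∈ Finset.range (n+1),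
          ((-1:ℤ)^(n+j) * j.factorial * (stirling2 n j : ℤ))
            * (((j:ℤ)+1) * ((j+1).choose 0) - (j:ℤ) * (j.choose 0))
          = (-1:ℤ)^(n+j) * j.factorial * (j.choose 0) * (stirling2 n j : ℤ) := by
        intro j _; simp
      rw [Finset.sum_congr rfl pt0, ih 0]
      rw [show stirling2 (n+1+1) (0+1) = 1 * stirling2 (n+1) 1 + stirling2 (n+1) 0 from rfl,
        show stirling2 (n+1) 0 = 0 from rfl]
      push_cast
      ring
    | succ i =>
      have pt : ∀ j ∈ Finset.range (n+1),
          ((-1:ℤ)^(n+j) * j.factorial * (stirling2 n j : ℤ))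
            * (((j:ℤ)+1) * ((j+1).choose (i+1)) - (j:ℤ) * (j.choose (i+1)))
          = ((i:ℤ)+2) * ((-1:ℤ)^(n+j) * j.factorial * (j.choose (i+1)) * (stirling2 n j : ℤ))
            + ((i:ℤ)+1) * ((-1:ℤ)^(n+j) * j.factorial * (j.choose i) * (stirling2 n j : ℤ)) := by
        intro j _
        have h := chooseId j i
        linear_combination ((-1:ℤ)^(n+j) * j.factorial * (stirling2 n j : ℤ)) * h
      rw [Finset.sum_congr rfl pt, Finset.sum_add_distrib, ← Finset.mul_sum, ← Finset.mul_sum,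
        ih (i+1), ih i]
      rw [show stirling2 (n+1+1) (i+1+1) = (i+1+1) * stirling2 (n+1) (i+1+1) + stirling2 (n+1) (i+1) from rfl]
      have hf : ((i+1).factorial : ℤ) = ((i:ℤ)+1) * i.factorial := by
        rw [Nat.factorial_succ]; push_cast; ring
      rw [hf]
      push_cast
      ring

lemma part1 (n m : ℕ) :
    (∑ j ∈ Finset.range (min n m + 1),
        ((j.factorial : ℤ)) ^ 2 * (stirling2 (n + 1) (j + 1) : ℤ) *
          (stirling2 (m + 1) (j + 1) : ℤ) =
      ∑ j ∈ Finset.range (n + 1),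
        (-1 : ℤ) ^ (n + j) * (j.factorial : ℤ) * (stirling2 n j : ℤ) * ((j : ℤ) + 1) ^ m) := by
  have main : ∑ j ∈ Finset.range (n+1),
        (-1 : ℤ) ^ (n + j) * (j.factorial : ℤ) * (stirling2 n j : ℤ) * ((j : ℤ) + 1) ^ m
      = ∑ i ∈ Finset.range (m+1),
          ((i.factorial : ℤ)) ^ 2 * (stirling2 (n + 1) (i + 1) : ℤ) * (stirling2 (m + 1) (i + 1) : ℤ) := by
    have expand : ∀ j ∈ Finset.range (n+1),
        (-1 : ℤ) ^ (n + j) * (j.factorial : ℤ) * (stirling2 n j : ℤ) * ((j : ℤ) + 1) ^ m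
        = ∑ i ∈ Finset.range (m+1),
            (-1 : ℤ) ^ (n + j) * (j.factorial : ℤ) * (stirling2 n j : ℤ) *
              ((stirling2 (m+1) (i+1) : ℤ) * i.factorial * (j.choose i)) := by
      intro j _
      rw [lemA m j, Finset.mul_sum]
    rw [Finset.sum_congr rfl expand, Finset.sum_comm]
    refine Finset.sum_congr rfl ?_
    intro i _
    have inner : ∀ j ∈ Finset.range (n+1),
        (-1 : ℤ) ^ (n + j) * (j.factorial : ℤ) * (stirling2 n j : ℤ) *
            ((stirling2 (m+1) (i+1) : ℤ) * i.factorial * (j.choose i))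
        = ((stirling2 (m+1) (i+1) : ℤ) * i.factorial) *
            ((-1:ℤ)^(n+j) * j.factorial * (j.choose i) * (stirling2 n j : ℤ)) := by
      intro j _; ring
    rw [Finset.sum_congr rfl inner, ← Finset.mul_sum, lemB n i]
    ring
  rw [main]
  refine Finset.sum_subset ?_ ?_
  · exact Finset.range_subset_range.mpr (by omega)
  · intro i hi hni
    simp only [Finset.mem_range] at hi hni
    have hn : n < i := by omega
    rw [st_zero (n+1) (i+1) (by omega)]
    push_cast
    ring

theorem stmt_14 (n m : ℕ) :
    (∑ j ∈ Finset.range (min n m + 1),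
        ((j.factorial : ℤ)) ^ 2 * (stirling2 (n + 1) (j + 1) : ℤ) *
          (stirling2 (m + 1) (j + 1) : ℤ) =
      ∑ j ∈ Finset.range (n + 1),
        (-1 : ℤ) ^ (n + j) * (j.factorial : ℤ) * (stirling2 n j : ℤ) * ((j : ℤ) + 1) ^ m) ∧
    (∑ j ∈ Finset.range (n + 1),
        (-1 : ℤ) ^ (n + j) * (j.factorial : ℤ) * (stirling2 n j : ℤ) * ((j : ℤ) + 1) ^ m =
      ∑ j ∈ Finset.range (m + 1),
        (-1 : ℤ) ^ (m + j) * (j.factorial : ℤ) * (stirling2 m j : ℤ) * ((j : ℤ) + 1) ^ n) := by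
  refine ⟨part1 n m, ?_⟩
  rw [← part1 n m, ← part1 m n, min_comm]
  exact Finset.sum_congr rfl fun j _ => by ring
end

section
/- For all integers n ≥ 2 and m ≥ 0 the following identity of rational numbers holds: (Π_{k=1}^{n−2} Cat_k) · Π_{1 ≤ i < j ≤ n−1} (2m + i + j + 1)/(i + j − 1) = Π_{j=m+1}^{m+n−2} (1/(2j+1)) · C(n+m+j, 2j), where Cat_k = (1/(k+1))·C(2k,k) is the k-th Catalan number and C(a,b) is the binomial coefficient. -/
/-!
Write `n = p + 2` and induct on `p`. Passing from `p` to `p + 1`, the left side gains the Catalan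
number `Cat_{p+1}` and the new column `i ↦ (2m+i+p+3)/(i+p+1)` of the double product; on the
right a new top factor `m + p + 2` appears and each `C(p+2+m+j, 2j)` is multiplied by
`(p+m+j+3)/(p+m+3-j)`. Both gains are quotients of factorials, and both equal
`C(2m+2p+4, p+1)/(p+2)`, which for `m = 0` is `Cat_{p+2}`.
-/

open Finset Nat

section Intervals

variable {M : Type*} [CommMonoid M]

theorem prod_Ioc_comp_add_left {α : Type*} [AddCommMonoid α] [PartialOrder α]
    [IsOrderedCancelAddMonoid α] [ExistsAddOfLE α] [LocallyFiniteOrder α]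
    (f : α → M) (a b c : α) :
    ∏ x ∈ Ioc a b, f (c + x) = ∏ x ∈ Ioc (c + a) (c + b), f x := by
  rw [← map_add_left_Ioc, prod_map]
  rfl

theorem prod_Icc_prod_Ioc_succ_top (f : ℕ → ℕ → M) {a N : ℕ} (h : a ≤ N + 1) :
    ∏ i ∈ Icc a (N + 1), ∏ j ∈ Ioc i (N + 1), f i j =
      (∏ i ∈ Icc a N, ∏ j ∈ Ioc i N, f i j) * ∏ i ∈ Icc a N, f i (N + 1) := by
  rw [prod_Icc_succ_top h, Ioc_self, prod_empty, mul_one, ← prod_mul_distrib]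
  exact prod_congr rfl fun i hi => prod_Ioc_succ_top (mem_Icc.1 hi).2 _

end Intervals

section Factorials

variable {K : Type*} [Field K] [CharZero K]

theorem factorial_mul_prod_Ioc {a b : ℕ} (h : a ≤ b) : a ! * ∏ x ∈ Ioc a b, x = b ! := by
  induction b, h using Nat.le_induction with
  | base => simp
  | succ b hab ih => rw [prod_Ioc_succ_top hab, ← mul_assoc, ih, factorial_succ, mul_comm]

theorem prod_Ioc_natCast_eq_factorial_div {a b : ℕ} (h : a ≤ b) :
    ∏ x ∈ Ioc a b, (x : K) = b ! / a ! := by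
  rw [eq_div_iff (Nat.cast_ne_zero.2 (factorial_ne_zero a)), mul_comm, ← Nat.cast_prod,
    ← Nat.cast_mul, factorial_mul_prod_Ioc h]

theorem prod_Ioc_natCast_add_eq_factorial_div {a b : ℕ} (h : a ≤ b) (c : ℕ) :
    ∏ x ∈ Ioc a b, ((c + x : ℕ) : K) = (c + b)! / (c + a)! := by
  rw [prod_Ioc_comp_add_left (fun x : ℕ => (x : K)), prod_Ioc_natCast_eq_factorial_div (by omega)]

theorem cast_choose_succ {q k : ℕ} (h : k ≤ q) :
    ((q + 1).choose k : K) = q.choose k * (q + 1) / (q + 1 - k : ℕ) := by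
  rw [eq_div_iff (by norm_cast; omega)]
  exact_mod_cast (choose_mul_succ_eq q k).symm

end Factorials

theorem choose_two_mul_add_two_two_mul (a : ℕ) :
    (2 * a + 2).choose (2 * a) = (a + 1) * (2 * a + 1) := by
  rw [choose_symm_of_eq_add rfl, choose_two_right,
    show (2 * a + 2) * (2 * a + 2 - 1) = 2 * ((a + 1) * (2 * a + 1)) by
      rw [show 2 * a + 2 - 1 = 2 * a + 1 by omega]; ring,
    Nat.mul_div_cancel_left _ two_pos]

def stepRatio (m p : ℕ) : ℚ := ((2 * m + 2 * p + 4).choose (p + 1) : ℚ) / (p + 2)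

theorem stepRatio_eq_factorial (m p : ℕ) :
    stepRatio m p = (2 * m + 2 * p + 4)! / ((p + 1)! * (2 * m + p + 3)! * (p + 2)) := by
  rw [stepRatio, cast_choose ℚ (by omega),
    show 2 * m + 2 * p + 4 - (p + 1) = 2 * m + p + 3 by omega, div_div]

theorem catalan_mul_prod_eq_stepRatio (m p : ℕ) :
    1 / (((p + 1 : ℕ) : ℚ) + 1) * ((2 * (p + 1)).choose (p + 1) : ℚ) *
      ∏ i ∈ Icc 1 (p + 1),
        ((2 * m + i + (p + 2) + 1 : ℕ) : ℚ) / ((i + (p + 2) - 1 : ℕ) : ℚ) =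
    stepRatio m p := by
  have Icc_one_eq : Icc 1 (p + 1) = Ioc 0 (p + 1) := Icc_add_one_left_eq_Ioc 0 (p + 1)
  have hnum : ∏ i ∈ Icc 1 (p + 1), ((2 * m + i + (p + 2) + 1 : ℕ) : ℚ) =
      (2 * m + 2 * p + 4)! / (2 * m + p + 3)! := by
    rw [Icc_one_eq, prod_congr rfl fun i _ => by
        rw [show 2 * m + i + (p + 2) + 1 = (2 * m + p + 3) + i by ring],
      prod_Ioc_natCast_add_eq_factorial_div (by omega)]
    congr 3
    ring
  have hden :
      ∏ i ∈ Icc 1 (p + 1), ((i + (p + 2) - 1 : ℕ) : ℚ) = (2 * p + 2)! / (p + 1)! := by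
    rw [Icc_one_eq,
      prod_congr rfl fun i _ => by rw [show i + (p + 2) - 1 = (p + 1) + i by omega],
      prod_Ioc_natCast_add_eq_factorial_div (by omega)]
    congr 3
    ring
  rw [prod_div_distrib, hnum, hden, stepRatio_eq_factorial, cast_choose ℚ (by omega),
    show 2 * (p + 1) - (p + 1) = p + 1 by omega, show 2 * (p + 1) = 2 * p + 2 by ring]
  push_cast
  field_simp
  ring

theorem mul_prod_reflect_eq_stepRatio (m p : ℕ) :
    ((m : ℚ) + p + 2) *
      ∏ j ∈ Icc (m + 1) (m + p), ((p + m + j + 3 : ℕ) : ℚ) / ((p + 3 + m - j : ℕ) : ℚ) =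
    stepRatio m p := by
  have hnum : ∏ j ∈ Icc (m + 1) (m + p), ((p + m + j + 3 : ℕ) : ℚ) =
      (2 * m + 2 * p + 3)! / (2 * m + p + 3)! := by
    rw [Icc_add_one_left_eq_Ioc, prod_congr rfl fun j _ => by
        rw [show p + m + j + 3 = (p + m + 3) + j by ring],
      prod_Ioc_natCast_add_eq_factorial_div (by omega)]
    congr 3 <;> ring
  have hden : ∏ j ∈ Icc (m + 1) (m + p), ((p + 3 + m - j : ℕ) : ℚ) = (p + 2)! / 2 ! := by
    rw [← prod_Ioc_natCast_eq_factorial_div (by omega)]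
    refine prod_nbij' (fun j => p + 3 + m - j) (fun x => p + 3 + m - x) ?_ ?_ ?_ ?_ ?_ <;>
      intros <;> simp_all only [mem_Icc, mem_Ioc] <;> omega
  rw [prod_div_distrib, hnum, hden, stepRatio_eq_factorial,
    show 2 * m + 2 * p + 4 = (2 * m + 2 * p + 3) + 1 by ring, factorial_succ (2 * m + 2 * p + 3),
    show p + 2 = (p + 1) + 1 by ring, factorial_succ (p + 1)]
  push_cast
  field_simp
  ring

-- The two sides of the identity at `n = p + 2`.
def catalanPairProd (m p : ℕ) : ℚ :=
  (∏ k ∈ Icc 1 p, ((1 : ℚ) / (k + 1) * ((2 * k).choose k : ℚ))) *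
    ∏ i ∈ Icc 1 (p + 1), ∏ j ∈ Ioc i (p + 1),
      (((2 * m + i + j + 1 : ℕ) : ℚ) / ((i + j - 1 : ℕ) : ℚ))

def binomProd (m p : ℕ) : ℚ :=
  ∏ j ∈ Icc (m + 1) (m + p), ((1 : ℚ) / (2 * j + 1) * ((p + 2 + m + j).choose (2 * j) : ℚ))

theorem catalanPairProd_succ (m p : ℕ) :
    catalanPairProd m (p + 1) = catalanPairProd m p * stepRatio m p := by
  rw [catalanPairProd, catalanPairProd, prod_Icc_succ_top (by omega),
    prod_Icc_prod_Ioc_succ_top _ (by omega), ← catalan_mul_prod_eq_stepRatio]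
  ring

theorem binomProd_succ (m p : ℕ) : binomProd m (p + 1) = binomProd m p * stepRatio m p := by
  have top : (1 : ℚ) / (2 * ((m + p + 1 : ℕ) : ℚ) + 1) *
      ((p + 1 + 2 + m + (m + p + 1)).choose (2 * (m + p + 1)) : ℚ) = m + p + 2 := by
    rw [show p + 1 + 2 + m + (m + p + 1) = 2 * (m + p + 1) + 2 by ring,
      choose_two_mul_add_two_two_mul]
    push_cast
    field_simp
    ring
  have factor : ∀ j ∈ Icc (m + 1) (m + p),
      (1 : ℚ) / (2 * j + 1) * ((p + 1 + 2 + m + j).choose (2 * j) : ℚ) =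
        (1 : ℚ) / (2 * j + 1) * ((p + 2 + m + j).choose (2 * j) : ℚ) *
          (((p + m + j + 3 : ℕ) : ℚ) / ((p + 3 + m - j : ℕ) : ℚ)) := by
    intro j hj
    rw [mem_Icc] at hj
    rw [show p + 1 + 2 + m + j = (p + 2 + m + j) + 1 by ring, cast_choose_succ (by omega),
      show p + 2 + m + j + 1 - 2 * j = p + 3 + m - j by omega]
    push_cast
    ring
  rw [binomProd, binomProd, show m + (p + 1) = m + p + 1 by ring, prod_Icc_succ_top (by omega),
    top, prod_congr rfl factor, prod_mul_distrib, ← mul_prod_reflect_eq_stepRatio]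
  ring

theorem catalanPairProd_eq_binomProd (m p : ℕ) : catalanPairProd m p = binomProd m p := by
  induction p with
  | zero => simp [catalanPairProd, binomProd]
  | succ p ih => rw [catalanPairProd_succ, binomProd_succ, ih]

theorem stmt_16 (n m : ℕ) (hn : 2 ≤ n) :
    (∏ k ∈ Finset.Icc 1 (n - 2), ((1 : ℚ) / (k + 1) * ((2 * k).choose k : ℚ))) *
      ∏ i ∈ Finset.Icc 1 (n - 1), ∏ j ∈ Finset.Ioc i (n - 1),
        (((2 * m + i + j + 1 : ℕ) : ℚ) / ((i + j - 1 : ℕ) : ℚ)) =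
    ∏ j ∈ Finset.Icc (m + 1) (m + n - 2),
        ((1 : ℚ) / (2 * j + 1) * ((n + m + j).choose (2 * j) : ℚ)) := by
  obtain ⟨p, rfl⟩ : ∃ p, n = p + 2 := ⟨n - 2, by omega⟩
  exact catalanPairProd_eq_binomProd m p
end

section
/- For all integers n ≥ 1 and k ≥ 1 the following identity of polynomials in β with rational coefficients holds: C(n+k−1, k) · Σ_{j=0}^{k−1} (k/(n+j)) · C(k−1, j) · β^j = Σ_{j=0}^{k−1} C(n+j−1, j) · (1+β)^j. -/
/-!
Let `hookCoeff n k j = C(n+k-1, k) · k/(n+j) · C(k-1, j)` be the coefficient of `β^j` on the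
left-hand side. The identities `k · C(k-1, j) = (k-j) · C(k, j)` and
`(k+1) · C(n+k, k+1) = (n+k) · C(n+k-1, k)` give
`hookCoeff n (k+1) j - hookCoeff n k j = C(n+k-1, k) · C(k, j)`, the coefficient of `β^j` in
`C(n+k-1, k) · (1+β)^k`. So both sides grow by the same term when `k` increases, and the identity
follows by induction on `k`.
-/

open Polynomial Finset

theorem Nat.cast_mul_choose_pred {R : Type*} [CommRing R] {k j : ℕ} (hj : j ≤ k) :
    (k * (k - 1).choose j : R) = (k - j) * k.choose j := by
  obtain _ | k := k
  · obtain rfl : j = 0 := by omega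
    simp
  · have h : ((k.choose j * (k + 1) : ℕ) : R) = ((k + 1).choose j * (k + 1 - j) : ℕ) := by
      rw [Nat.choose_mul_succ_eq]
    push_cast [Nat.cast_sub hj] at h ⊢
    rw [mul_comm, h, mul_comm]

theorem Nat.cast_add_one_mul_choose_add_one {R : Type*} [CommRing R] (m k : ℕ) :
    ((k + 1) * (m + 1).choose (k + 1) : R) = (m + 1) * m.choose k := by
  have h := congrArg (Nat.cast : ℕ → R) (Nat.add_one_mul_choose_eq m k)
  push_cast at h
  rw [h, mul_comm]

noncomputable def hookCoeff (n k j : ℕ) : ℚ :=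
  (n + k - 1).choose k * ((k : ℚ) / (n + j) * (k - 1).choose j)

theorem hookCoeff_succ {n k j : ℕ} (hn : 1 ≤ n) (hj : j ≤ k) :
    hookCoeff n (k + 1) j = hookCoeff n k j + (n + k - 1).choose k * k.choose j := by
  obtain ⟨m, hm⟩ : ∃ m, n + k = m + 1 := ⟨n + k - 1, by omega⟩
  have hnk : (n + k : ℚ) = m + 1 := by exact_mod_cast hm
  have hnj : (n + j : ℚ) ≠ 0 := by positivity
  have hk := Nat.cast_mul_choose_pred (R := ℚ) hj
  have hm' := Nat.cast_add_one_mul_choose_add_one (R := ℚ) m k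
  simp only [hookCoeff, ← add_assoc, hm, Nat.add_sub_cancel, Nat.cast_succ]
  field_simp
  linear_combination k.choose j * hm' - m.choose k * hk - (m.choose k * k.choose j : ℚ) * hnk

theorem hookCoeff_self (n k : ℕ) : hookCoeff n k k = 0 := by
  obtain _ | k := k <;> simp [hookCoeff]

noncomputable def hookSum (n k : ℕ) : ℚ[X] :=
  ∑ j ∈ range k, C (hookCoeff n k j) * X ^ j

theorem one_add_X_pow_eq_sum {R : Type*} [CommSemiring R] (k : ℕ) :
    (1 + X : R[X]) ^ k = ∑ j ∈ range (k + 1), C (k.choose j : R) * X ^ j := by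
  rw [add_comm, add_pow]
  refine sum_congr rfl fun j _ => ?_
  rw [one_pow, mul_one, ← map_natCast C, mul_comm]

theorem hookSum_succ {n : ℕ} (hn : 1 ≤ n) (k : ℕ) :
    hookSum n (k + 1) = hookSum n k + C ((n + k - 1).choose k : ℚ) * (1 + X) ^ k := by
  calc hookSum n (k + 1)
      = ∑ j ∈ range (k + 1), (C (hookCoeff n k j) * X ^ j +
          C ((n + k - 1).choose k : ℚ) * (C (k.choose j : ℚ) * X ^ j)) := by
        refine sum_congr rfl fun j hj => ?_
        rw [hookCoeff_succ hn (Nat.lt_succ_iff.mp (mem_range.mp hj)), C_add, C_mul]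
        ring
    _ = hookSum n k + C ((n + k - 1).choose k : ℚ) * (1 + X) ^ k := by
        rw [sum_add_distrib, ← mul_sum, sum_range_succ, hookCoeff_self, C_0, zero_mul, add_zero,
          one_add_X_pow_eq_sum, hookSum]

theorem hookSum_eq_sum_one_add_X_pow {n : ℕ} (hn : 1 ≤ n) (k : ℕ) :
    hookSum n k = ∑ j ∈ range k, C ((n + j - 1).choose j : ℚ) * (1 + X) ^ j := by
  induction k with
  | zero => simp [hookSum]
  | succ k ih => rw [hookSum_succ hn, ih, sum_range_succ]

theorem stmt_19_general (n k : ℕ) (hn : 1 ≤ n) :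
    Polynomial.C (((n + k - 1).choose k : ℚ)) *
      ∑ j ∈ Finset.range k,
        Polynomial.C ((k : ℚ) / (n + j) * ((k - 1).choose j : ℚ)) * Polynomial.X ^ j =
    ∑ j ∈ Finset.range k,
        Polynomial.C (((n + j - 1).choose j : ℚ)) * (1 + Polynomial.X) ^ j := by
  rw [← hookSum_eq_sum_one_add_X_pow hn, hookSum, mul_sum]
  simp only [hookCoeff, C_mul, mul_assoc]

theorem stmt_19 (n k : ℕ) (hn : 1 ≤ n) (hk : 1 ≤ k) :
    Polynomial.C (((n + k - 1).choose k : ℚ)) *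
      ∑ j ∈ Finset.range k,
        Polynomial.C ((k : ℚ) / (n + j) * ((k - 1).choose j : ℚ)) * Polynomial.X ^ j =
    ∑ j ∈ Finset.range k,
        Polynomial.C (((n + j - 1).choose j : ℚ)) * (1 + Polynomial.X) ^ j :=
  stmt_19_general n k hn
end
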